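/- Let q be an even prime power, let ω be a primitive element of F_{q²}, let α = ω^{q−1} (a primitive (q+1)-st root of unity), and let k be odd with 1 ≤ k ≤ q; write k = q − 2r − 1. Let g_2(X) = ∏_{i=q/2−r}^{q/2+r+1} (X − α^i), a polynomial with coefficients in F_q dividing X^{q+1} − 1. Then the k-dimensional cyclic code ⟨g_2⟩ of length q+1 over F_q is a generalised Reed–Solomon code (and is a [q+1, k, q+2−k]_q MDS code). -/

import Mathlib

/-!
Write `k = 2s + 1`, so that `q = 2s + 2r + 2` and the zeros of `g₂` are the `α^ℓ` with
`s < ℓ ≤ q - s`, and let `ρ = α^(q/2+1)`, a square root of `α` of order `q + 1`.  The powers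
`ρ^(i+1)`, `i = 0, …, q`, are the `(q+1)`-st roots of unity, a set of representatives of
`𝔽_{q²}^× / 𝔽_q^×`, so the points `(Tr(ω ρ^(i+1)) : Tr(ρ^(i+1)))` are the `q + 1` points of the
projective line over `𝔽_q`, the last one (`ρ^(q+1) = 1`, trace `0` in characteristic two) being
the point at infinity.  Evaluating the degree-`2s` homogenisations of the polynomials of degree
`≤ 2s` at these points gives exactly the GRS code of the statement.

Over `𝔽_{q²}` the `i`-th coordinate of such a word is `α^(-s(i+1)) Q(α^(i+1))` for a polynomial
`Q` of degree `≤ 2s`, because `Tr(x) = x + x^q` and `ν^q = ν⁻¹` for the roots of unity `ν`.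
Evaluating the word polynomial at `α^ℓ` therefore produces the geometric sums
`∑ᵢ α^((t - s + ℓ) i)` with `0 ≤ t ≤ 2s`, which vanish for `s < ℓ ≤ q - s`.  So every GRS word
is divisible by `g₂`, i.e. lies in `⟨g₂⟩`; both codes have dimension `k`, hence coincide, and
the minimum distance is the usual root count for GRS codes.
-/

open Polynomial

/-- A generalised Reed–Solomon code of length `q+1` and dimension `k`, with symbols from the
field `F` of `q` elements, viewed inside the `F`-algebra `K` via `algebraMap`. -/
def IsGRSCode (q k : ℕ) (F K : Type*) [Field F] [CommRing K] [Algebra F K]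
    (Code : Set (Fin (q + 1) → K)) : Prop :=
  ∃ (a : Fin q → F) (θ : Fin (q + 1) → F),
    Function.Bijective a ∧ (∀ i, θ i ≠ 0) ∧
    Code = { w | ∃ f : Polynomial F, f.degree ≤ (k - 1 : ℕ) ∧
      w = fun i => algebraMap F K
        (θ i * (Fin.snoc (fun j : Fin q => f.eval (a j)) (f.coeff (k - 1)) : Fin (q + 1) → F) i) }

open Finset

namespace Polynomial

section Homogenize

variable {R S : Type*} [CommSemiring R] [CommSemiring S] [Algebra R S]

theorem aeval_homogenize (f : R[X]) (d : ℕ) (x : Fin 2 → S) :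
    MvPolynomial.aeval x (f.homogenize d) =
      ∑ t ∈ range (d + 1), algebraMap R S (f.coeff t) * x 0 ^ t * x 1 ^ (d - t) := by
  simp only [homogenize, map_sum, MvPolynomial.aeval_monomial,
    Nat.sum_antidiagonal_eq_sum_range_succ_mk]
  refine sum_congr rfl fun t _ => ?_
  rw [Finsupp.update_eq_add_single, Finsupp.prod_add_index', Finsupp.prod_single_index,
    Finsupp.prod_single_index, mul_assoc]
  all_goals simp [pow_add]

theorem aeval_homogenize_smul (f : R[X]) (d : ℕ) (c : S) (x : Fin 2 → S) :
    MvPolynomial.aeval (c • x) (f.homogenize d) =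
      c ^ d * MvPolynomial.aeval x (f.homogenize d) := by
  simp only [aeval_homogenize, Pi.smul_apply, smul_eq_mul, mul_sum]
  refine sum_congr rfl fun t ht => ?_
  obtain ⟨e, rfl⟩ := Nat.exists_eq_add_of_le (Nat.lt_succ_iff.1 (mem_range.1 ht))
  rw [add_tsub_cancel_left]
  ring

theorem aeval_homogenize_of_eq_zero (f : R[X]) (d : ℕ) {x : Fin 2 → S} (hx : x 1 = 0) :
    MvPolynomial.aeval x (f.homogenize d) = algebraMap R S (f.coeff d) * x 0 ^ d := by
  rw [aeval_homogenize, sum_range_succ, sum_eq_zero fun t ht => ?_, hx]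
  · simp
  · rw [hx, zero_pow (Nat.sub_ne_zero_of_lt (mem_range.1 ht)), mul_zero]

theorem natDegree_aeval_homogenize_le (f : R[X]) (d : ℕ) {L : Fin 2 → S[X]}
    (hL : ∀ i, (L i).natDegree ≤ 1) : (MvPolynomial.aeval L (f.homogenize d)).natDegree ≤ d := by
  rw [aeval_homogenize]
  refine natDegree_sum_le_of_forall_le _ _ fun t ht => ?_
  have ht : t ≤ d := Nat.lt_succ_iff.1 (mem_range.1 ht)
  rw [algebraMap_apply, mul_assoc]
  calc _ ≤ t * 1 + (d - t) * 1 := (natDegree_C_mul_le _ _).trans <|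
        natDegree_mul_le_of_le (natDegree_pow_le_of_le t (hL 0)) (natDegree_pow_le_of_le _ (hL 1))
    _ = d := by omega

end Homogenize

theorem aeval_ofFn {R A : Type*} [CommSemiring R] [DecidableEq R] [CommSemiring A] [Algebra R A]
    {n : ℕ} (w : Fin n → R) (z : A) :
    aeval z (ofFn n w) = ∑ i, algebraMap R A (w i) * z ^ (i : ℕ) := by
  simp [ofFn_eq_sum_monomial, aeval_monomial]

theorem mem_span_shifts_of_dvd_ofFn {R : Type*} [CommRing R] [IsDomain R] [DecidableEq R]
    {n k : ℕ} {g : R[X]} (hg : g ≠ 0) (hn : n ≤ g.natDegree + k) {w : Fin n → R}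
    (hw : g ∣ ofFn n w) :
    w ∈ Submodule.span R (Set.range fun (t : Fin k) (i : Fin n) =>
      if (t : ℕ) ≤ i then g.coeff (i - t) else 0) := by
  obtain ⟨u, hwu⟩ := hw
  by_cases hu0 : u = 0
  · rw [injective_ofFn n (hwu.trans (by rw [hu0, mul_zero, ← ofFn_zero n]))]
    exact zero_mem _
  have hne : ofFn n w ≠ 0 := hwu ▸ mul_ne_zero hg hu0
  have hlt := ofFn_natDegree_lt (Nat.one_le_iff_ne_zero.2 (ne_zero_of_ofFn_ne_zero hne)) w
  have hu : u.natDegree < k := by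
    rw [hwu, natDegree_mul hg hu0] at hlt
    omega
  refine (Submodule.mem_span_range_iff_exists_fun R).2 ⟨fun t => u.coeff t, ?_⟩
  ext i
  simp only [Finset.sum_apply, Pi.smul_apply, smul_eq_mul]
  rw [← ofFn_coeff_eq_val_of_lt w i.2, hwu]
  conv_rhs => rw [as_sum_range' u k hu, mul_sum, finsetSum_coeff, ← Fin.sum_univ_eq_sum_range]
  refine sum_congr rfl fun t _ => ?_
  rw [← C_mul_X_pow_eq_monomial, ← mul_assoc, coeff_mul_X_pow', coeff_mul_C]
  split_ifs <;> simp [mul_comm]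

theorem prod_X_sub_C_dvd {K ι : Type*} [Field K] {s : Finset ι} {z : ι → K} (hz : Set.InjOn z s)
    {p : K[X]} (hp : ∀ i ∈ s, p.eval (z i) = 0) : ∏ i ∈ s, (X - C (z i)) ∣ p :=
  prod_dvd_of_coprime (fun _ hi _ hj hij =>
      isCoprime_X_sub_C_of_isUnit_sub (sub_ne_zero.2 (hz.ne hi hj hij)).isUnit)
    fun i hi => dvd_iff_isRoot.2 (hp i hi)

theorem exists_monic_map_eq {R S : Type*} [Semiring R] [Semiring S] {φ : R →+* S}
    (hφ : Function.Injective φ) {p : S[X]} (hp : p.Monic) {c : ℕ → R}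
    (hc : ∀ j, φ (c j) = p.coeff j) : ∃ g : R[X], g.Monic ∧ g.map φ = p ∧ g.coeff = c := by
  obtain ⟨g, hg : g.map φ = p⟩ := (lifts_iff_coeff_lifts p).2 fun j => ⟨c j, hc j⟩
  refine ⟨g, monic_of_injective hφ (by rwa [hg]), hg, ?_⟩
  ext j
  exact hφ (by rw [hc, ← hg, coeff_map])

theorem sum_eval_mul_pow_eq_zero {K : Type*} [Field K] {n : ℕ} {Q : K[X]} (a b c : K)
    (h : ∀ t ≤ Q.natDegree, (b ^ t * c) ^ n = 1 ∧ b ^ t * c ≠ 1) :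
    ∑ i ∈ range n, Q.eval (a * b ^ i) * c ^ i = 0 := by
  simp_rw [eval_eq_sum_range, sum_mul]
  rw [sum_comm]
  refine sum_eq_zero fun t ht => ?_
  obtain ⟨hn, hne⟩ := h t (Nat.lt_succ_iff.1 (mem_range.1 ht))
  calc ∑ i ∈ range n, Q.coeff t * (a * b ^ i) ^ t * c ^ i
      = Q.coeff t * a ^ t * ∑ i ∈ range n, (b ^ t * c) ^ i := by
        rw [mul_sum]
        exact sum_congr rfl fun i _ => by ring
    _ = 0 := by rw [geom_sum_eq hne, hn, sub_self, zero_div, mul_zero]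

end Polynomial

theorem Module.finrank_eq_of_card_eq_pow {F V : Type*} [Field F] [Fintype F] [AddCommGroup V]
    [Module F V] [Fintype V] {n : ℕ} (hV : Fintype.card V = Fintype.card F ^ n) :
    Module.finrank F V = n :=
  Nat.pow_right_injective Fintype.one_lt_card <| (Module.card_eq_pow_finrank (K := F)).symm.trans hV

theorem IsPrimitiveRoot.pow_sub_one_of_orderOf_eq {M : Type*} [CommMonoid M] {ω : M} {q : ℕ}
    (hω : orderOf ω = q ^ 2 - 1) (hq : 2 ≤ q) : IsPrimitiveRoot (ω ^ (q - 1)) (q + 1) := by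
  have hsq : q ^ 2 - 1 = (q - 1) * (q + 1) := by rw [mul_comm, ← Nat.sq_sub_sq, one_pow]
  have h := (hω ▸ IsPrimitiveRoot.orderOf ω).pow_of_dvd (by omega : q - 1 ≠ 0)
    (hsq ▸ dvd_mul_right _ _)
  rwa [hsq, Nat.mul_div_cancel_left _ (by omega)] at h

theorem pow_ne_self_of_isPrimitiveRoot_pow_sub_one {K : Type*} [Field K] {ω : K} {q : ℕ}
    (hq : 2 ≤ q) (hω : IsPrimitiveRoot (ω ^ (q - 1)) (q + 1)) : ω ^ q ≠ ω := by
  have hω0 : ω ≠ 0 := by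
    rintro rfl
    exact hω.ne_zero (by omega) (zero_pow (by omega))
  intro h
  refine hω.ne_one (by omega) (mul_right_cancel₀ hω0 ?_)
  rw [← pow_succ, Nat.sub_add_cancel (by omega), h, one_mul]

section GRS

variable {F : Type*} [Field F] {q : ℕ}

def grsEncode (a : Fin q → F) (θ : Fin (q + 1) → F) (d : ℕ) : F[X] →ₗ[F] Fin (q + 1) → F where
  toFun f i := θ i * (Fin.snoc (fun j => f.eval (a j)) (f.coeff d) : Fin (q + 1) → F) i
  map_add' f g := by
    ext i
    induction i using Fin.lastCases <;> simp [mul_add]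
  map_smul' c f := by
    ext i
    induction i using Fin.lastCases <;> simp [mul_left_comm]

noncomputable def grsCode (a : Fin q → F) (θ : Fin (q + 1) → F) (d : ℕ) :
    Submodule F (Fin (q + 1) → F) :=
  (degreeLE F d).map (grsEncode a θ d)

variable {a : Fin q → F} {θ : Fin (q + 1) → F} {d : ℕ}

@[simp]
theorem grsEncode_castSucc (f : F[X]) (j : Fin q) :
    grsEncode a θ d f j.castSucc = θ j.castSucc * f.eval (a j) := by
  simp [grsEncode]

@[simp]
theorem grsEncode_last (f : F[X]) :
    grsEncode a θ d f (Fin.last q) = θ (Fin.last q) * f.coeff d := by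
  simp [grsEncode]

theorem isGRSCode_grsCode (k : ℕ) (ha : Function.Bijective a) (hθ : ∀ i, θ i ≠ 0) :
    IsGRSCode q k F F (grsCode a θ (k - 1)) := by
  refine ⟨a, θ, ha, hθ, ?_⟩
  ext w
  simp [grsCode, grsEncode, mem_degreeLE, eq_comm]

theorem grsEncode_eq_eval_homogenize (P : Fin (q + 1) → Fin 2 → F)
    (hP : ∀ j : Fin q, P j.castSucc 1 ≠ 0) (hP_last : P (Fin.last q) 1 = 0) {f : F[X]}
    (hf : f.natDegree ≤ d) (i : Fin (q + 1)) :
    grsEncode (fun j => P j.castSucc 0 / P j.castSucc 1)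
        (Fin.snoc (fun j => P j.castSucc 1 ^ d) (P (Fin.last q) 0 ^ d)) d f i =
      MvPolynomial.eval (P i) (f.homogenize d) := by
  induction i using Fin.lastCases with
  | last =>
    rw [grsEncode_last, ← MvPolynomial.aeval_eq_eval, aeval_homogenize_of_eq_zero f d hP_last]
    simp [mul_comm]
  | cast j =>
    rw [grsEncode_castSucc, eval_homogenize hf _ (hP j)]
    simp [mul_comm]

theorem card_filter_eval_eq_zero_le [DecidableEq F] {ι : Type*} [Fintype ι] {a : ι → F}
    (ha : Function.Injective a) {f : F[X]} (hf : f ≠ 0) :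
    #{j | f.eval (a j) = 0} ≤ f.natDegree := by
  calc #{j | f.eval (a j) = 0} = #(({j | f.eval (a j) = 0} : Finset ι).image a) :=
        (card_image_of_injective _ ha).symm
    _ ≤ f.natDegree := card_le_degree_of_subset_roots fun x hx => by
        obtain ⟨j, hj, rfl⟩ := mem_image.1 hx
        exact (mem_roots hf).2 (mem_filter.1 hj).2

theorem le_hammingNorm_grsEncode [DecidableEq F] (ha : Function.Injective a)
    (hθ : ∀ i, θ i ≠ 0) {f : F[X]} (hf : f ∈ degreeLE F d) (hf0 : f ≠ 0) :
    q + 1 - d ≤ hammingNorm (grsEncode a θ d f) := by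
  have hdeg : f.natDegree ≤ d := natDegree_le_iff_degree_le.2 (mem_degreeLE.1 hf)
  have hzeros : #{i | grsEncode a θ d f i = 0} =
      #{j | f.eval (a j) = 0} + if f.coeff d = 0 then 1 else 0 := by
    rw [card_filter, card_filter, Fin.sum_univ_castSucc]
    simp [hθ]
  have hsplit := card_filter_add_card_filter_not (s := univ) (fun i => grsEncode a θ d f i = 0)
  have hroots := card_filter_eval_eq_zero_le ha hf0
  rw [card_univ, Fintype.card_fin] at hsplit
  simp only [hammingNorm, ne_eq]
  split_ifs at hzeros with hd
  · have : f.natDegree ≠ d := fun h => hf0 (leadingCoeff_eq_zero.1 (by rw [leadingCoeff, h, hd]))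
    omega
  · omega

theorem finrank_grsCode (ha : Function.Injective a) (hθ : ∀ i, θ i ≠ 0) (hd : d < q) :
    Module.finrank F (grsCode a θ d) = d + 1 := by
  classical
  have hinj : Function.Injective ((grsEncode a θ d).domRestrict (degreeLE F d)) := by
    rw [← LinearMap.ker_eq_bot, LinearMap.ker_eq_bot']
    rintro ⟨f, hf⟩ hf0
    by_contra hne
    have := le_hammingNorm_grsEncode ha hθ hf fun h => hne (Subtype.ext h)
    rw [LinearMap.domRestrict_apply] at hf0
    rw [hf0, hammingNorm_zero] at this
    omega
  rw [grsCode, ← LinearMap.range_domRestrict, LinearMap.finrank_range_of_inj hinj,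
    ← degreeLT_succ_eq_degreeLE, (degreeLTEquiv F (d + 1)).finrank_eq, Module.finrank_fin_fun]

end GRS

noncomputable def tracePoint (F : Type*) {K : Type*} [Field F] [Field K] [Algebra F K]
    (ω ν : K) : Fin 2 → F :=
  ![Algebra.trace F K (ω * ν), Algebra.trace F K ν]

section TracePoints

variable {F K : Type*} [Field F] [Fintype F] [Field K] [Fintype K] [Algebra F K] {q : ℕ}

theorem algebraMap_trace_eq_add_pow (hF : Fintype.card F = q) (hK : Module.finrank F K = 2)
    (z : K) : algebraMap F K (Algebra.trace F K z) = z + z ^ q := by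
  rw [FiniteField.algebraMap_trace_eq_sum_pow, hK, Nat.card_eq_fintype_card, hF]
  simp [sum_range_succ]

theorem trace_eq_zero_iff_pow_eq_self [CharP K 2] (hF : Fintype.card F = q)
    (hK : Module.finrank F K = 2) (z : K) : Algebra.trace F K z = 0 ↔ z ^ q = z := by
  rw [← (algebraMap F K).injective.eq_iff, algebraMap_trace_eq_add_pow hF hK, map_zero,
    add_eq_zero_iff_eq_neg, CharTwo.neg_eq, eq_comm]

theorem algebraMap_trace_mul_trace_sub (hF : Fintype.card F = q) (hK : Module.finrank F K = 2)
    (ω : K) {μ ν : K} (hμ : μ ^ (q + 1) = 1) (hν : ν ^ (q + 1) = 1) :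
    algebraMap F K (Algebra.trace F K (ω * μ) * Algebra.trace F K ν -
        Algebra.trace F K (ω * ν) * Algebra.trace F K μ) = (ω - ω ^ q) * (μ / ν - ν / μ) := by
  have hμ0 : μ ≠ 0 := by rintro rfl; simp at hμ
  have hν0 : ν ≠ 0 := by rintro rfl; simp at hν
  have hμq : μ ^ q = μ⁻¹ := eq_inv_of_mul_eq_one_left (by rw [← pow_succ, hμ])
  have hνq : ν ^ q = ν⁻¹ := eq_inv_of_mul_eq_one_left (by rw [← pow_succ, hν])
  simp only [map_sub, map_mul, algebraMap_trace_eq_add_pow hF hK, mul_pow, hμq, hνq]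
  field_simp
  ring

theorem algebraMap_eval_homogenize_tracePoint (hF : Fintype.card F = q)
    (hK : Module.finrank F K = 2) (f : F[X]) (s : ℕ) (ω : K) {ν : K} (hν : ν ^ (q + 1) = 1) :
    algebraMap F K (MvPolynomial.eval (tracePoint F ω ν) (f.homogenize (2 * s))) =
      (ν ^ 2)⁻¹ ^ s *
        (MvPolynomial.aeval ![C ω * X + C (ω ^ q), X + 1] (f.homogenize (2 * s))).eval (ν ^ 2) := by
  have hν0 : ν ≠ 0 := by rintro rfl; simp at hν
  have hνq : ν ^ q = ν⁻¹ := eq_inv_of_mul_eq_one_left (by rw [← pow_succ, hν])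
  have hpoint : (fun i => algebraMap F K (tracePoint F ω ν i)) =
      ν⁻¹ • ![ω * ν ^ 2 + ω ^ q, ν ^ 2 + 1] := by
    ext i
    fin_cases i <;> simp [tracePoint, algebraMap_trace_eq_add_pow hF hK, mul_pow, hνq] <;>
      field_simp
  rw [← MvPolynomial.aeval_eq_eval, ← Algebra.ofId_apply, MvPolynomial.comp_aeval_apply]
  simp only [Algebra.ofId_apply]
  rw [hpoint, aeval_homogenize_smul, ← coe_aeval_eq_eval,
    ← AlgHom.restrictScalars_apply F (aeval (R := K) (ν ^ 2)), MvPolynomial.comp_aeval_apply]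
  congr 1
  · rw [pow_mul, inv_pow, inv_pow]
  · congr 1
    ext i
    fin_cases i <;> simp

variable {α ρ : K}

theorem trace_pow_ne_zero [CharP K 2] (hF : Fintype.card F = q) (hK : Module.finrank F K = 2)
    (hα : IsPrimitiveRoot α (q + 1)) (hρ : ρ ^ 2 = α) (hρ1 : ρ ^ (q + 1) = 1) {m : ℕ}
    (hm0 : m ≠ 0) (hmq : m ≤ q) : Algebra.trace F K (ρ ^ m) ≠ 0 := by
  rw [Ne, trace_eq_zero_iff_pow_eq_self hF hK]
  intro h
  refine hα.pow_ne_one_of_pos_of_lt hm0 (by omega) ?_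
  calc α ^ m = (ρ ^ m) ^ q * ρ ^ m := by rw [h, ← hρ, pow_right_comm, sq]
    _ = 1 := by rw [← pow_succ, pow_right_comm, hρ1, one_pow]

theorem injective_tracePoint_ratio [CharP K 2] (hF : Fintype.card F = q)
    (hK : Module.finrank F K = 2) (hα : IsPrimitiveRoot α (q + 1)) (hρ : ρ ^ 2 = α)
    (hρ1 : ρ ^ (q + 1) = 1) {ω : K} (hω : ω ^ q ≠ ω) :
    Function.Injective fun j : Fin q =>
      tracePoint F ω (ρ ^ (j + 1 : ℕ)) 0 / tracePoint F ω (ρ ^ (j + 1 : ℕ)) 1 := by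
  intro i j hij
  have hρ0 : ρ ≠ 0 := by rintro rfl; simp at hρ1
  have hroot (m : ℕ) : (ρ ^ m) ^ (q + 1) = 1 := by rw [pow_right_comm, hρ1, one_pow]
  simp only [tracePoint, Matrix.cons_val_zero, Matrix.cons_val_one] at hij
  rw [div_eq_div_iff (trace_pow_ne_zero hF hK hα hρ hρ1 (by omega) (by omega))
    (trace_pow_ne_zero hF hK hα hρ hρ1 (by omega) (by omega)), ← sub_eq_zero] at hij
  have := congrArg (algebraMap F K) hij
  rw [algebraMap_trace_mul_trace_sub hF hK ω (hroot _) (hroot _), map_zero, mul_eq_zero,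
    sub_eq_zero, sub_eq_zero, div_eq_div_iff (pow_ne_zero _ hρ0) (pow_ne_zero _ hρ0)] at this
  obtain h | h := this
  · exact absurd h.symm hω
  · rw [← sq, ← sq, pow_right_comm, hρ, pow_right_comm, hρ] at h
    exact Fin.ext (by simpa using hα.pow_inj (by omega) (by omega) h)

theorem aeval_ofFn_eval_homogenize_tracePoint_eq_zero [DecidableEq F] (hF : Fintype.card F = q)
    (hK : Module.finrank F K = 2) (hα : IsPrimitiveRoot α (q + 1)) (hρ : ρ ^ 2 = α)
    (hρ1 : ρ ^ (q + 1) = 1) (ω : K) {s : ℕ} (f : F[X]) {ℓ : ℕ} (hsℓ : s < ℓ) (hℓq : ℓ + s ≤ q) :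
    aeval (α ^ ℓ) (ofFn (q + 1) fun i =>
      MvPolynomial.eval (tracePoint F ω (ρ ^ (i + 1 : ℕ))) (f.homogenize (2 * s))) = 0 := by
  obtain ⟨Q, hQ⟩ : ∃ Q : K[X],
      Q = MvPolynomial.aeval ![C ω * X + C (ω ^ q), X + 1] (f.homogenize (2 * s)) := ⟨_, rfl⟩
  have hword (i : ℕ) : algebraMap F K (MvPolynomial.eval (tracePoint F ω (ρ ^ (i + 1)))
      (f.homogenize (2 * s))) * (α ^ ℓ) ^ i =
      α⁻¹ ^ s * (Q.eval (α * α ^ i) * (α⁻¹ ^ s * α ^ ℓ) ^ i) := by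
    rw [algebraMap_eval_homogenize_tracePoint hF hK f s ω (by rw [pow_right_comm, hρ1, one_pow]),
      ← hQ, pow_right_comm, hρ, pow_succ']
    ring
  rw [aeval_ofFn, Fin.sum_univ_eq_sum_range (fun i => algebraMap F K (MvPolynomial.eval
      (tracePoint F ω (ρ ^ (i + 1))) (f.homogenize (2 * s))) * (α ^ ℓ) ^ i),
    sum_congr rfl fun i _ => hword i, ← mul_sum, sum_eval_mul_pow_eq_zero, mul_zero]
  intro t ht
  have hQdeg : Q.natDegree ≤ 2 * s := hQ ▸ natDegree_aeval_homogenize_le f _ fun i => by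
    fin_cases i
    · exact natDegree_linear_le
    · exact (natDegree_add_le _ _).trans (by simp)
  have hexp : α ^ t * (α⁻¹ ^ s * α ^ ℓ) = α ^ (t + ℓ - s) := by
    rw [pow_sub₀ α (hα.ne_zero (by omega)) (by omega), inv_pow, pow_add]
    ring
  rw [hexp, ← pow_mul, mul_comm, pow_mul, hα.pow_eq_one, one_pow]
  exact ⟨rfl, hα.pow_ne_one_of_pos_of_lt (by omega) (by omega)⟩

variable {s : ℕ} {S : Finset ℕ} {g : F[X]}

theorem eval_homogenize_tracePoint_mem_span_shifts (hF : Fintype.card F = q)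
    (hK : Module.finrank F K = 2) (hα : IsPrimitiveRoot α (q + 1)) (hρ : ρ ^ 2 = α)
    (hρ1 : ρ ^ (q + 1) = 1) (ω : K) (hS : ∀ ℓ ∈ S, s < ℓ ∧ ℓ + s ≤ q) (hcard : q ≤ #S + 2 * s)
    (hg : g.Monic) (hgS : g.map (algebraMap F K) = ∏ ℓ ∈ S, (X - C (α ^ ℓ))) (f : F[X]) :
    (fun i : Fin (q + 1) =>
        MvPolynomial.eval (tracePoint F ω (ρ ^ (i + 1 : ℕ))) (f.homogenize (2 * s))) ∈
      Submodule.span F (Set.range fun (t : Fin (2 * s + 1)) (i : Fin (q + 1)) =>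
        if (t : ℕ) ≤ i then g.coeff (i - t) else 0) := by
  classical
  have hgdeg : g.natDegree = #S := by
    rw [← natDegree_map_eq_of_injective (algebraMap F K).injective, hgS,
      natDegree_finsetProd_X_sub_C_eq_card]
  refine mem_span_shifts_of_dvd_ofFn hg.ne_zero (by omega) ?_
  rw [← map_dvd_map _ (algebraMap F K).injective hg, hgS]
  refine prod_X_sub_C_dvd (fun ℓ hℓ ℓ' hℓ' h => ?_) fun ℓ hℓ => ?_
  · exact hα.pow_inj (by linarith [hS ℓ hℓ]) (by linarith [hS ℓ' hℓ']) h
  · rw [eval_map_algebraMap]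
    exact aeval_ofFn_eval_homogenize_tracePoint_eq_zero hF hK hα hρ hρ1 ω f (hS ℓ hℓ).1 (hS ℓ hℓ).2

theorem exists_grsCode_le_span_shifts [CharP K 2] (hF : Fintype.card F = q)
    (hK : Module.finrank F K = 2) (hq : Even q) (hα : IsPrimitiveRoot α (q + 1)) {ω : K}
    (hω : ω ^ q ≠ ω) (hS : ∀ ℓ ∈ S, s < ℓ ∧ ℓ + s ≤ q) (hcard : q ≤ #S + 2 * s) (hg : g.Monic)
    (hgS : g.map (algebraMap F K) = ∏ ℓ ∈ S, (X - C (α ^ ℓ))) :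
    ∃ (a : Fin q → F) (θ : Fin (q + 1) → F), Function.Bijective a ∧ (∀ i, θ i ≠ 0) ∧
      grsCode a θ (2 * s) ≤ Submodule.span F (Set.range fun (t : Fin (2 * s + 1))
        (i : Fin (q + 1)) => if (t : ℕ) ≤ i then g.coeff (i - t) else 0) := by
  obtain ⟨ρ, hρ, hρ1⟩ : ∃ ρ : K, ρ ^ 2 = α ∧ ρ ^ (q + 1) = 1 := by
    refine ⟨α ^ (q / 2 + 1), ?_, by rw [pow_right_comm, hα.pow_eq_one, one_pow]⟩
    rw [← pow_mul, show (q / 2 + 1) * 2 = q + 1 + 1 by have := Nat.even_iff.1 hq; omega,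
      pow_succ, hα.pow_eq_one, one_mul]
  set P : Fin (q + 1) → Fin 2 → F := fun i => tracePoint F ω (ρ ^ (i + 1 : ℕ))
  have hy (j : Fin q) : P j.castSucc 1 ≠ 0 :=
    trace_pow_ne_zero hF hK hα hρ hρ1 (by omega) (by simp [Nat.succ_le_of_lt j.2])
  have hy_last : P (Fin.last q) 1 = 0 := by
    simp [P, tracePoint, hρ1, trace_eq_zero_iff_pow_eq_self hF hK]
  have hx_last : P (Fin.last q) 0 ≠ 0 := by
    simpa [P, tracePoint, hρ1, trace_eq_zero_iff_pow_eq_self hF hK] using hω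
  refine ⟨fun j => P j.castSucc 0 / P j.castSucc 1,
    Fin.snoc (fun j => P j.castSucc 1 ^ (2 * s)) (P (Fin.last q) 0 ^ (2 * s)),
    (Fintype.bijective_iff_injective_and_card _).2
      ⟨injective_tracePoint_ratio hF hK hα hρ hρ1 hω, by simp [hF]⟩, fun i => ?_, ?_⟩
  · induction i using Fin.lastCases <;> simp [hy, hx_last]
  · rintro _ ⟨f, hf, rfl⟩
    rw [funext (grsEncode_eq_eval_homogenize P hy hy_last
      (natDegree_le_iff_degree_le.2 (mem_degreeLE.1 hf)))]
    exact eval_homogenize_tracePoint_mem_span_shifts hF hK hα hρ hρ1 ω hS hcard hg hgS f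

end TracePoints

theorem grassl_roetteler_cyclic_odd_even_is_GRS_general
    (q k r : ℕ) (F K : Type*) [Field F] [Fintype F] [Field K] [Fintype K]
    [DecidableEq F] [Algebra F K]
    (hF : Fintype.card F = q) (hK : Fintype.card K = q ^ 2)
    (hqeven : Even q) (hkodd : Odd k)
    (hkr : (k : ℤ) = q - 2 * r - 1)
    (ω : K) (hω : orderOf ω = q ^ 2 - 1)
    (α : K) (hα : α = ω ^ (q - 1))
    (g₂ : Polynomial K)
    (hg₂ : g₂ = ∏ i ∈ Finset.Icc (q / 2 - r) (q / 2 + r + 1), (X - C (α ^ i)))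
    (c : ℕ → F) (hc : ∀ j, algebraMap F K (c j) = g₂.coeff j)
    (Code : Submodule F (Fin (q + 1) → F))
    (hCode : Code = Submodule.span F
      { v | ∃ t : Fin k, v = fun i : Fin (q + 1) =>
          if (t : ℕ) ≤ (i : ℕ) then c ((i : ℕ) - (t : ℕ)) else 0 }) :
    IsGRSCode q k F F (Code : Set (Fin (q + 1) → F)) ∧
    Module.finrank F Code = k ∧
    (∀ w ∈ Code, w ≠ 0 → q + 2 - k ≤ hammingNorm w) := by
  obtain ⟨s, rfl⟩ := hkodd
  have hq : q = 2 * s + 2 * r + 2 := by omega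
  have hK2 : Module.finrank F K = 2 := Module.finrank_eq_of_card_eq_pow (by rw [hK, hF])
  have : CharP K 2 := FiniteField.even_card_iff_char_two.2 (by
    rw [hK, Nat.pow_mod, Nat.even_iff.1 hqeven]) ▸ ringChar.charP K
  have hα' : IsPrimitiveRoot (ω ^ (q - 1)) (q + 1) := .pow_sub_one_of_orderOf_eq hω (by omega)
  subst hα
  obtain ⟨g, hg, hgg₂, rfl⟩ := exists_monic_map_eq (algebraMap F K).injective
    (hg₂ ▸ monic_prod_of_monic _ _ fun i _ => monic_X_sub_C _) hc
  have hspan : Code = Submodule.span F (Set.range fun (t : Fin (2 * s + 1)) (i : Fin (q + 1)) =>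
      if (t : ℕ) ≤ i then g.coeff (i - t) else 0) := by
    rw [hCode]
    congr 1
    ext v
    simp [eq_comm]
  obtain ⟨a, θ, ha, hθ, hle⟩ := exists_grsCode_le_span_shifts hF hK2 hqeven hα'
    (pow_ne_self_of_isPrimitiveRoot_pow_sub_one (by omega) hα') (s := s)
    (S := Icc (q / 2 - r) (q / 2 + r + 1)) (fun ℓ hℓ => by simp at hℓ; omega) (by simp; omega)
    hg (hgg₂.trans hg₂)
  have hfin : Module.finrank F (grsCode a θ (2 * s)) = 2 * s + 1 :=
    finrank_grsCode ha.1 hθ (by omega)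
  obtain rfl : grsCode a θ (2 * s) = Code :=
    Submodule.eq_of_le_of_finrank_le (hle.trans hspan.ge) <| hfin.ge.trans' <|
      hspan ▸ (finrank_range_le_card _).trans (by simp)
  refine ⟨isGRSCode_grsCode (2 * s + 1) ha hθ, hfin, ?_⟩
  rintro _ ⟨f, hf, rfl⟩ hw
  exact (le_hammingNorm_grsEncode ha.1 hθ hf (by rintro rfl; exact hw (map_zero _))).trans'
    (by omega)

/-- Let `q` be an even prime power, `ω` a primitive element of `𝔽_{q²}`,
`α = ω^{q−1}` a primitive `(q+1)`-st root of unity, and let `k` be odd with `1 ≤ k ≤ q`;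
write `k = q − 2r − 1`.  Let `g₂(X) = ∏_{i=q/2−r}^{q/2+r+1} (X − α^i)`, a polynomial with
coefficients `c j` in `𝔽_q` dividing `X^{q+1} − 1`.  Then the `k`-dimensional cyclic code
`⟨g₂⟩` of length `q+1` over `𝔽_q` (the span of the `k` cyclic shifts of
`(c₀,…,c_{q+1−k},0,…,0)`) is a generalised Reed–Solomon code, and is a `[q+1,k,q+2−k]_q`
MDS code. -/
theorem grassl_roetteler_cyclic_odd_even_is_GRS
    (q k r : ℕ) (F K : Type*) [Field F] [Fintype F] [Field K] [Fintype K]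
    [DecidableEq F] [Algebra F K]
    (hF : Fintype.card F = q) (hK : Fintype.card K = q ^ 2)
    (hqeven : Even q) (hkodd : Odd k) (hk1 : 1 ≤ k) (hkq : k ≤ q)
    (hkr : (k : ℤ) = q - 2 * r - 1)
    (ω : K) (hω : orderOf ω = q ^ 2 - 1)
    (α : K) (hα : α = ω ^ (q - 1))
    (g₂ : Polynomial K)
    (hg₂ : g₂ = ∏ i ∈ Finset.Icc (q / 2 - r) (q / 2 + r + 1), (X - C (α ^ i)))
    (c : ℕ → F) (hc : ∀ j, algebraMap F K (c j) = g₂.coeff j)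
    (Code : Submodule F (Fin (q + 1) → F))
    (hCode : Code = Submodule.span F
      { v | ∃ t : Fin k, v = fun i : Fin (q + 1) =>
          if (t : ℕ) ≤ (i : ℕ) then c ((i : ℕ) - (t : ℕ)) else 0 }) :
    IsGRSCode q k F F (Code : Set (Fin (q + 1) → F)) ∧
    Module.finrank F Code = k ∧
    (∀ w ∈ Code, w ≠ 0 → q + 2 - k ≤ hammingNorm w) :=
  grassl_roetteler_cyclic_odd_even_is_GRS_general q k r F K hF hK hqeven hkodd hkr ω hω α hα g₂ hg₂
    c hc Code hCode
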